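/- Let G be a Vilenkin group and n ∈ ℕ with |n| ≠ ⟨n⟩. If x ∈ I_{⟨n⟩+1}(e_{⟨n⟩}), i.e. x_j = 0 for j < ⟨n⟩, x_{⟨n⟩} = 1, then |D_n(x)| = |D_{n − M_{|n|}}(x)| and |D_n(x)| ≥ M_{⟨n⟩}. -/

import Mathlib

open MeasureTheory Complex Real

def Mseq (m : ℕ → ℕ) : ℕ → ℕ
  | 0 => 1
  | k + 1 => m k * Mseq m k

def digit (m : ℕ → ℕ) (n j : ℕ) : ℕ := n / Mseq m j % m j

noncomputable def hi (m : ℕ → ℕ) (n : ℕ) : ℕ := sSup {j | digit m n j ≠ 0}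

noncomputable def lo (m : ℕ → ℕ) (n : ℕ) : ℕ := sInf {j | digit m n j ≠ 0}

noncomputable def rho (m : ℕ → ℕ) (n : ℕ) : ℕ := hi m n - lo m n

abbrev Gm (m : ℕ → ℕ) := ∀ k, ZMod (m k)

instance (n : ℕ) : MeasurableSpace (ZMod n) := ⊤

noncomputable def rad (m : ℕ → ℕ) (j : ℕ) (x : Gm m) : ℂ :=
  Complex.exp (2 * Real.pi * Complex.I * ((x j).val : ℂ) / (m j : ℂ))

noncomputable def vil (m : ℕ → ℕ) (n : ℕ) (x : Gm m) : ℂ :=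
  ∏ᶠ j, rad m j x ^ digit m n j

noncomputable def Dker (m : ℕ → ℕ) (n : ℕ) (x : Gm m) : ℂ :=
  ∑ k ∈ Finset.range n, vil m k x

/-- The defining property of the normalized Haar measure on the Vilenkin group:
every cylinder set `I_n(x)` has measure `1 / M_n`. -/
def IsVilenkinHaar (m : ℕ → ℕ) (μ : Measure (Gm m)) : Prop :=
  ∀ (n : ℕ) (x : Gm m), μ {y : Gm m | ∀ j < n, y j = x j} = (Mseq m n : ENNReal)⁻¹

noncomputable def vilCoeff (m : ℕ → ℕ) (μ : Measure (Gm m)) (f : Gm m → ℂ) (j : ℕ) : ℂ :=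
  ∫ t, f t * (starRingEnd ℂ) (vil m j t) ∂μ

noncomputable def Svil (m : ℕ → ℕ) (μ : Measure (Gm m)) (f : Gm m → ℂ) (n : ℕ) (x : Gm m) : ℂ :=
  ∑ j ∈ Finset.range n, vilCoeff m μ f j * vil m j x

/-
For `q ≤ M_k` and `r ≤ m_k`, `D_{r M_k + q} = (∑_{s<r} r_k^s) D_{M_k} + ψ_{r M_k} D_q` with
`r_k = rad m k`, and `D_{M_k}(x) = 0` as soon as some coordinate `x_j` with `j < k` is nonzero.
Since `x_{⟨n⟩} ≠ 0`, peeling off digits gives `|D_n(x)| = |D_{n mod M_k}(x)|` for every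
`k > ⟨n⟩`. With `k = |n|`, both `n` and `n - M_{|n|}` reduce to `n mod M_{|n|}`. With
`k = ⟨n⟩ + 1` we get `n mod M_k = d M_{⟨n⟩}` for the digit `d = n_{⟨n⟩}`, and as `x` vanishes
below `⟨n⟩` with `x_{⟨n⟩} = 1`, `D_{d M_{⟨n⟩}}(x) = M_{⟨n⟩} ∑_{s<d} ω^s` for
`ω = exp(2πi / m_{⟨n⟩})`. This geometric sum has modulus `|sin(π d / m)| / sin(π / m) ≥ 1`
because `0 < d < m`.
-/

open Finset

section Vilenkin

variable {m : ℕ → ℕ}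

@[simp] lemma Mseq_succ (m : ℕ → ℕ) (k : ℕ) : Mseq m (k + 1) = m k * Mseq m k := rfl

lemma Mseq_pos (hm : ∀ k, 0 < m k) (k : ℕ) : 0 < Mseq m k := by
  induction k with
  | zero => exact Nat.one_pos
  | succ k ih => exact Nat.mul_pos (hm k) ih

lemma Mseq_dvd_Mseq {k l : ℕ} (h : k ≤ l) : Mseq m k ∣ Mseq m l := by
  induction l, h using Nat.le_induction with
  | base => exact dvd_rfl
  | succ l _ ih => exact ih.mul_left (m l)

lemma Mseq_monotone (hm : ∀ k, 0 < m k) : Monotone (Mseq m) :=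
  monotone_nat_of_le_succ fun k => Nat.le_mul_of_pos_left _ (hm k)

lemma lt_Mseq (hm : ∀ k, 2 ≤ m k) (k : ℕ) : k < Mseq m k := by
  induction k with
  | zero => exact Nat.one_pos
  | succ k ih =>
    have : 2 * Mseq m k ≤ m k * Mseq m k := Nat.mul_le_mul_right _ (hm k)
    rw [Mseq_succ]
    omega

lemma digit_lt (hm : ∀ k, 0 < m k) (n j : ℕ) : digit m n j < m j :=
  Nat.mod_lt _ (hm j)

lemma digit_eq_zero_of_lt_Mseq {n j : ℕ} (h : n < Mseq m j) : digit m n j = 0 := by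
  simp [digit, Nat.div_eq_of_lt h]

lemma digit_eq_zero_of_le (hm : ∀ k, 2 ≤ m k) {n j : ℕ} (h : n ≤ j) : digit m n j = 0 :=
  digit_eq_zero_of_lt_Mseq (h.trans_lt (lt_Mseq hm j))

lemma digit_eq_mod_div (n j : ℕ) : digit m n j = n % Mseq m (j + 1) / Mseq m j := by
  rw [Mseq_succ, mul_comm, Nat.mod_mul_right_div_self, digit]

lemma digit_mod_Mseq {n j k : ℕ} (hj : j < k) : digit m (n % Mseq m k) j = digit m n j := by
  rw [digit_eq_mod_div, digit_eq_mod_div, Nat.mod_mod_of_dvd _ (Mseq_dvd_Mseq hj)]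

lemma mod_Mseq_succ (n k : ℕ) : n % Mseq m (k + 1) = digit m n k * Mseq m k + n % Mseq m k := by
  rw [Mseq_succ, mul_comm, Nat.mod_mul, digit]
  ring

lemma mod_Mseq_eq_zero {n k : ℕ} (h : ∀ j < k, digit m n j = 0) : n % Mseq m k = 0 := by
  induction k with
  | zero => exact Nat.mod_one n
  | succ k ih =>
    rw [mod_Mseq_succ, h k k.lt_succ_self, ih fun j hj => h j (hj.trans k.lt_succ_self),
      zero_mul]

lemma digit_mul_Mseq_of_lt {r j k : ℕ} (hj : j < k) :
    digit m (r * Mseq m k) j = 0 := by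
  rw [← digit_mod_Mseq hj, Nat.mul_mod_left]
  simp [digit]

lemma digit_mul_Mseq_add_of_le (hm : ∀ k, 0 < m k) {r i j k : ℕ} (hi : i < Mseq m k)
    (hj : k ≤ j) : digit m (r * Mseq m k + i) j = digit m (r * Mseq m k) j := by
  obtain ⟨c, hc⟩ := Mseq_dvd_Mseq (m := m) hj
  have hk := Mseq_pos hm k
  rw [digit, digit, hc, ← Nat.div_div_eq_div_mul, ← Nat.div_div_eq_div_mul, mul_comm r,
    Nat.mul_add_div hk, Nat.div_eq_of_lt hi, add_zero, Nat.mul_div_cancel_left _ hk]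

lemma digit_mul_Mseq_add (hm : ∀ k, 0 < m k) {r i k : ℕ} (hi : i < Mseq m k) (j : ℕ) :
    digit m (r * Mseq m k + i) j = digit m (r * Mseq m k) j + digit m i j := by
  rcases lt_or_ge j k with hj | hj
  · rw [digit_mul_Mseq_of_lt hj, zero_add, ← digit_mod_Mseq hj, add_comm,
      Nat.add_mul_mod_self_right, Nat.mod_eq_of_lt hi]
  · rw [digit_mul_Mseq_add_of_le hm hi hj,
      digit_eq_zero_of_lt_Mseq (hi.trans_le (Mseq_monotone hm hj)), add_zero]

lemma digit_mul_Mseq (hm : ∀ k, 0 < m k) {r k : ℕ} (hr : r < m k) (j : ℕ) :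
    digit m (r * Mseq m k) j = if j = k then r else 0 := by
  rcases lt_trichotomy j k with hj | rfl | hj
  · rw [digit_mul_Mseq_of_lt hj, if_neg hj.ne]
  · rw [if_pos rfl, digit, Nat.mul_div_cancel _ (Mseq_pos hm j), Nat.mod_eq_of_lt hr]
  · have : r * Mseq m k < Mseq m (k + 1) := Nat.mul_lt_mul_of_pos_right hr (Mseq_pos hm k)
    rw [digit_eq_zero_of_lt_Mseq (this.trans_le (Mseq_monotone hm hj)), if_neg hj.ne']

lemma rad_eq_pow (j : ℕ) (x : Gm m) : rad m j x = exp (2 * π * I / m j) ^ (x j).val := by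
  rw [rad, ← Complex.exp_nat_mul]
  ring_nf

lemma norm_rad (hm : ∀ k, 0 < m k) (j : ℕ) (x : Gm m) : ‖rad m j x‖ = 1 := by
  rw [rad_eq_pow, norm_pow, (isPrimitiveRoot_exp _ (hm j).ne').norm'_eq_one (hm j).ne', one_pow]

lemma rad_pow_self (hm : ∀ k, 0 < m k) (j : ℕ) (x : Gm m) : rad m j x ^ m j = 1 := by
  rw [rad_eq_pow, ← pow_mul, mul_comm (x j).val, pow_mul,
    (isPrimitiveRoot_exp _ (hm j).ne').pow_eq_one, one_pow]

lemma rad_ne_one (hm : ∀ k, 0 < m k) {j : ℕ} {x : Gm m} (h : x j ≠ 0) : rad m j x ≠ 1 := by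
  have : NeZero (m j) := ⟨(hm j).ne'⟩
  rw [rad_eq_pow, Ne, (isPrimitiveRoot_exp _ (hm j).ne').pow_eq_one_iff_dvd]
  exact fun hdvd => h ((ZMod.val_eq_zero _).mp (Nat.eq_zero_of_dvd_of_lt hdvd (ZMod.val_lt _)))

lemma geom_sum_rad (hm : ∀ k, 0 < m k) (j : ℕ) (x : Gm m) :
    ∑ r ∈ range (m j), rad m j x ^ r = if x j = 0 then (m j : ℂ) else 0 := by
  split_ifs with h
  · simp [rad_eq_pow, h]
  · rw [geom_sum_eq (rad_ne_one hm h), rad_pow_self hm, sub_self, zero_div]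

lemma vil_zero (x : Gm m) : vil m 0 x = 1 := by
  simp [vil, digit]

lemma norm_vil (hm : ∀ k, 0 < m k) (n : ℕ) (x : Gm m) : ‖vil m n x‖ = 1 :=
  finprod_induction (‖·‖ = 1) norm_one (fun a b ha hb => by rw [norm_mul, ha, hb, one_mul])
    fun j => by rw [norm_pow, norm_rad hm, one_pow]

lemma hasFiniteMulSupport_rad_pow_digit (hm : ∀ k, 2 ≤ m k) (n : ℕ) (x : Gm m) :
    (fun j => rad m j x ^ digit m n j).HasFiniteMulSupport :=
  (Set.finite_Iio n).subset <| Function.mulSupport_subset_iff'.mpr fun j hj => by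
    rw [digit_eq_zero_of_le hm (not_lt.mp hj), pow_zero]

lemma vil_mul_Mseq_add (hm : ∀ k, 2 ≤ m k) {r i k : ℕ} (hi : i < Mseq m k) (x : Gm m) :
    vil m (r * Mseq m k + i) x = vil m (r * Mseq m k) x * vil m i x := by
  have hm0 : ∀ k, 0 < m k := fun k => zero_lt_two.trans_le (hm k)
  simp only [vil, digit_mul_Mseq_add hm0 hi, pow_add]
  exact finprod_mul_distrib (hasFiniteMulSupport_rad_pow_digit hm _ x)
    (hasFiniteMulSupport_rad_pow_digit hm _ x)

lemma vil_mul_Mseq (hm : ∀ k, 0 < m k) {r k : ℕ} (hr : r < m k) (x : Gm m) :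
    vil m (r * Mseq m k) x = rad m k x ^ r := by
  rw [vil, finprod_eq_single _ k fun j hj => by rw [digit_mul_Mseq hm hr, if_neg hj, pow_zero],
    digit_mul_Mseq hm hr, if_pos rfl]

lemma Dker_mul_Mseq_add (hm : ∀ k, 2 ≤ m k) {q k : ℕ} (r : ℕ) (hq : q ≤ Mseq m k)
    (x : Gm m) :
    Dker m (r * Mseq m k + q) x =
      Dker m (r * Mseq m k) x + vil m (r * Mseq m k) x * Dker m q x := by
  rw [Dker, sum_range_add, Dker, Dker, mul_sum]
  congr 1
  exact sum_congr rfl fun i hi => vil_mul_Mseq_add hm ((mem_range.mp hi).trans_le hq) x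

lemma Dker_mul_Mseq (hm : ∀ k, 2 ≤ m k) {a k : ℕ} (ha : a ≤ m k) (x : Gm m) :
    Dker m (a * Mseq m k) x = (∑ r ∈ range a, rad m k x ^ r) * Dker m (Mseq m k) x := by
  have hm0 : ∀ k, 0 < m k := fun k => zero_lt_two.trans_le (hm k)
  induction a with
  | zero => simp [Dker]
  | succ a ih =>
    rw [Nat.succ_mul, Dker_mul_Mseq_add hm a le_rfl, ih (Nat.le_of_succ_le ha),
      vil_mul_Mseq hm0 (Nat.lt_of_succ_le ha), sum_range_succ, add_mul]

lemma Dker_Mseq_of_forall_eq_zero (hm : ∀ k, 2 ≤ m k) {k : ℕ} {x : Gm m}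
    (h : ∀ j < k, x j = 0) : Dker m (Mseq m k) x = Mseq m k := by
  induction k with
  | zero => simp [Dker, Mseq, vil_zero]
  | succ k ih =>
    rw [Mseq_succ, Dker_mul_Mseq hm le_rfl, geom_sum_rad (fun k => zero_lt_two.trans_le (hm k)),
      if_pos (h k k.lt_succ_self), ih fun j hj => h j (hj.trans k.lt_succ_self)]
    push_cast
    rfl

lemma Dker_Mseq_eq_zero (hm : ∀ k, 2 ≤ m k) {j k : ℕ} {x : Gm m} (hj : j < k)
    (hx : x j ≠ 0) :
    Dker m (Mseq m k) x = 0 := by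
  induction k with
  | zero => exact absurd hj (Nat.not_lt_zero j)
  | succ k ih =>
    rw [Mseq_succ, Dker_mul_Mseq hm le_rfl, geom_sum_rad (fun k => zero_lt_two.trans_le (hm k))]
    rcases Nat.lt_succ_iff_lt_or_eq.mp hj with hjk | rfl
    · rw [ih hjk, mul_zero]
    · rw [if_neg hx, zero_mul]

lemma norm_Dker_mul_Mseq_add (hm : ∀ k, 2 ≤ m k) {j k r q : ℕ} {x : Gm m} (hj : j < k)
    (hx : x j ≠ 0) (hr : r ≤ m k) (hq : q ≤ Mseq m k) :
    ‖Dker m (r * Mseq m k + q) x‖ = ‖Dker m q x‖ := by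
  rw [Dker_mul_Mseq_add hm r hq, Dker_mul_Mseq hm hr, Dker_Mseq_eq_zero hm hj hx, mul_zero,
    zero_add, norm_mul, norm_vil fun k => zero_lt_two.trans_le (hm k), one_mul]

lemma norm_Dker_mod_Mseq (hm : ∀ k, 2 ≤ m k) {j k : ℕ} {x : Gm m} (hj : j < k)
    (hx : x j ≠ 0) (n : ℕ) : ‖Dker m n x‖ = ‖Dker m (n % Mseq m k) x‖ := by
  have hm0 : ∀ k, 0 < m k := fun k => zero_lt_two.trans_le (hm k)
  have hstep : ∀ K, k ≤ K →
      ‖Dker m (n % Mseq m K) x‖ = ‖Dker m (n % Mseq m k) x‖ := by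
    intro K hK
    induction K, hK using Nat.le_induction with
    | base => rfl
    | succ K hK ih =>
      rw [mod_Mseq_succ, norm_Dker_mul_Mseq_add hm (hj.trans_le hK) hx (digit_lt hm0 n K).le
        (Nat.mod_lt _ (Mseq_pos hm0 K)).le, ih]
  have hn : n < Mseq m (max k n) :=
    (lt_Mseq hm n).trans_le (Mseq_monotone hm0 (le_max_right k n))
  rw [← hstep _ (le_max_left k n), Nat.mod_eq_of_lt hn]

lemma sin_le_sin_of_le_of_le_pi_sub {a t : ℝ} (ha : 0 ≤ a) (hat : a ≤ t)
    (hta : t ≤ π - a) :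
    Real.sin a ≤ Real.sin t := by
  rcases le_total t (π / 2) with ht | ht
  · exact Real.sin_le_sin_of_le_of_le_pi_div_two (by linarith [pi_pos]) ht hat
  · rw [← Real.sin_pi_sub t]
    exact Real.sin_le_sin_of_le_of_le_pi_div_two (by linarith [pi_pos]) (by linarith) (by linarith)

lemma norm_exp_pow_sub_one (N t : ℕ) :
    ‖exp (2 * π * I / N) ^ t - 1‖ = 2 * |Real.sin (π * t / N)| := by
  have harg : (t : ℂ) * (2 * π * I / N) = I * ((2 * (π * t / N) : ℝ) : ℂ) := by
    push_cast; ring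
  rw [← Complex.exp_nat_mul, harg, Complex.norm_exp_I_mul_ofReal_sub_one,
    mul_div_cancel_left₀ _ two_ne_zero, norm_mul, Real.norm_ofNat, Real.norm_eq_abs]

lemma one_le_norm_geom_sum_exp {N d : ℕ} (hd : 0 < d) (hdN : d < N) :
    1 ≤ ‖∑ r ∈ range d, exp (2 * π * I / N) ^ r‖ := by
  have hN : (2 : ℝ) ≤ N := by exact_mod_cast (by omega : 2 ≤ N)
  have hd1 : (1 : ℝ) ≤ d := by exact_mod_cast hd
  have hdN' : (d : ℝ) + 1 ≤ N := by exact_mod_cast hdN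
  have hζ := isPrimitiveRoot_exp N (by omega)
  have ha : 0 < π / N := by positivity
  have hsin : 0 < Real.sin (π / N) := Real.sin_pos_of_pos_of_lt_pi ha
    (div_lt_self pi_pos (by linarith))
  have hle : Real.sin (π / N) ≤ Real.sin (π * d / N) := by
    apply sin_le_sin_of_le_of_le_pi_sub ha.le
    · exact div_le_div_of_nonneg_right (le_mul_of_one_le_right pi_pos.le hd1) (by positivity)
    · rw [le_sub_iff_add_le, ← add_div, div_le_iff₀ (by linarith), ← mul_add_one]
      exact mul_le_mul_of_nonneg_left hdN' pi_pos.le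
  have hden := norm_exp_pow_sub_one N 1
  rw [pow_one, Nat.cast_one, mul_one, abs_of_pos hsin] at hden
  rw [geom_sum_eq (hζ.ne_one (by omega)), norm_div, norm_exp_pow_sub_one, hden,
    one_le_div (by positivity)]
  linarith [le_abs_self (Real.sin (π * d / N))]

lemma ne_zero_of_hi_ne_lo {n : ℕ} (h : hi m n ≠ lo m n) : n ≠ 0 := by
  rintro rfl
  have hS : {j | digit m 0 j ≠ 0} = ∅ := by simp [digit]
  exact h (by simp [hi, lo, hS])

lemma exists_digit_ne_zero (hm : ∀ k, 2 ≤ m k) {n : ℕ} (hn : n ≠ 0) :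
    ∃ j, digit m n j ≠ 0 := by
  by_contra! h
  exact hn (by rw [← Nat.mod_eq_of_lt (lt_Mseq hm n), mod_Mseq_eq_zero fun j _ => h j])

lemma bddAbove_digit_ne_zero (hm : ∀ k, 2 ≤ m k) (n : ℕ) : BddAbove {j | digit m n j ≠ 0} :=
  ⟨n, fun _ hj => not_lt.mp fun hnj => hj (digit_eq_zero_of_le hm hnj.le)⟩

lemma digit_lo_ne_zero (hm : ∀ k, 2 ≤ m k) {n : ℕ} (hn : n ≠ 0) :
    digit m n (lo m n) ≠ 0 :=
  Nat.sInf_mem (exists_digit_ne_zero hm hn)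

lemma digit_hi_ne_zero (hm : ∀ k, 2 ≤ m k) {n : ℕ} (hn : n ≠ 0) :
    digit m n (hi m n) ≠ 0 :=
  Nat.sSup_mem (exists_digit_ne_zero hm hn) (bddAbove_digit_ne_zero hm n)

lemma lo_le_hi (hm : ∀ k, 2 ≤ m k) {n : ℕ} (hn : n ≠ 0) : lo m n ≤ hi m n :=
  le_csSup (bddAbove_digit_ne_zero hm n) (digit_lo_ne_zero hm hn)

lemma Mseq_hi_le (hm : ∀ k, 2 ≤ m k) {n : ℕ} (hn : n ≠ 0) : Mseq m (hi m n) ≤ n :=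
  not_lt.mp fun h => digit_hi_ne_zero hm hn (digit_eq_zero_of_lt_Mseq h)

lemma digit_eq_zero_of_lt_lo {n j : ℕ} (hj : j < lo m n) : digit m n j = 0 :=
  not_not.mp (Nat.notMem_of_lt_sInf hj)

lemma mod_Mseq_lo_succ (n : ℕ) :
    n % Mseq m (lo m n + 1) = digit m n (lo m n) * Mseq m (lo m n) := by
  rw [mod_Mseq_succ, mod_Mseq_eq_zero fun _ => digit_eq_zero_of_lt_lo, add_zero]

end Vilenkin

/-- For `|n| ≠ ⟨n⟩` and `x ∈ I_{⟨n⟩+1}(e_{⟨n⟩})` one has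
`|D_n(x)| = |D_{n - M_{|n|}}(x)| ≥ M_{⟨n⟩}`. -/
theorem stmt_10 (m : ℕ → ℕ) (hm : ∀ k, 2 ≤ m k) (n : ℕ) (hne : hi m n ≠ lo m n)
    (x : Gm m) (hx1 : ∀ j < lo m n, x j = 0) (hx2 : x (lo m n) = 1) :
    ‖Dker m n x‖ = ‖Dker m (n - Mseq m (hi m n)) x‖ ∧
      (Mseq m (lo m n) : ℝ) ≤ ‖Dker m n x‖ := by
  have : Fact (1 < m (lo m n)) := ⟨hm _⟩
  have hm0 : ∀ k, 0 < m k := fun k => zero_lt_two.trans_le (hm k)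
  have hn := ne_zero_of_hi_ne_lo hne
  have hxlo : x (lo m n) ≠ 0 := hx2 ▸ one_ne_zero
  have hlt : lo m n < hi m n := (lo_le_hi hm hn).lt_of_ne hne.symm
  constructor
  · rw [norm_Dker_mod_Mseq hm hlt hxlo, norm_Dker_mod_Mseq hm hlt hxlo (n - _),
      ← Nat.mod_eq_sub_mod (Mseq_hi_le hm hn)]
  · have hrad : rad m (lo m n) x = exp (2 * π * I / m (lo m n)) := by
      rw [rad_eq_pow, hx2, ZMod.val_one, pow_one]
    rw [norm_Dker_mod_Mseq hm (lo m n).lt_succ_self hxlo, mod_Mseq_lo_succ,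
      Dker_mul_Mseq hm (digit_lt hm0 n _).le, Dker_Mseq_of_forall_eq_zero hm hx1, hrad, norm_mul,
      Complex.norm_natCast]
    exact le_mul_of_one_le_left (Nat.cast_nonneg _)
      (one_le_norm_geom_sum_exp (Nat.pos_of_ne_zero (digit_lo_ne_zero hm hn)) (digit_lt hm0 n _))
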